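/- arXiv:math/0610864 — 2 statements merged into one kernel-verified Lean document; each statement's English description precedes it below -/
import Mathlib

section
/- Let (M, m) be a measure space and for each x ∈ M let {B_n(x)}_{n≥1} and {C_n(x)}_{n≥1} be two sequences of measurable sets of positive finite measure. Suppose there exist k ∈ ℕ and D > 0 such that for all x and all n ≥ k: B_{n+k}(x) ⊆ C_n(x) ⊆ B_{n−k}(x) and m(B_{n+k}(x))/m(B_n(x)) ≥ D. Then for every measurable set X and every x: lim_{n→∞} m(X ∩ C_n(x))/m(C_n(x)) = 1 if and only if lim_{n→∞} m(X ∩ B_n(x))/m(B_n(x)) = 1. -/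
open MeasureTheory Filter

open scoped ENNReal Topology

/-! Density 1 of `X` in `A` means that `m (A \ X) / m A` tends to `0`, and passing to a subset
that carries at least a fraction `c` of the measure multiplies this ratio by at most `c⁻¹`. The
nesting gives `B (n + 2k) ⊆ C (n + k) ⊆ B n`, and two applications of the growth condition show
that each of these sets carries a fraction `D²` of the one containing it. -/

section DensityRatio

variable {M : Type*} [MeasurableSpace M] {m : Measure M} {s t : Set M}

theorem measure_sdiff_div_self_eq_one_sub (ht : NullMeasurableSet t m) (hs₀ : m s ≠ 0)
    (hs : m s ≠ ∞) : m (s \ t) / m s = 1 - m (t ∩ s) / m s := by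
  have hinter : m (t ∩ s) ≠ ∞ := ne_top_of_le_ne_top hs (measure_mono Set.inter_subset_right)
  have hsplit : m (s \ t) = m s - m (t ∩ s) :=
    ENNReal.eq_sub_of_add_eq hinter (by rw [add_comm, Set.inter_comm, measure_inter_add_sdiff₀ s ht])
  rw [hsplit, ENNReal.sub_div fun _ _ => hs₀, ENNReal.div_self hs₀ hs]

variable {ι : Type*} {l : Filter ι} {A P Q : ι → Set M}

theorem tendsto_measure_inter_div_one_iff_sdiff_div_zero (ht : NullMeasurableSet t m)
    (hA₀ : ∀ i, m (A i) ≠ 0) (hA : ∀ i, m (A i) ≠ ∞) :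
    Tendsto (fun i => m (t ∩ A i) / m (A i)) l (𝓝 1) ↔
      Tendsto (fun i => m (A i \ t) / m (A i)) l (𝓝 0) := by
  simp_rw [measure_sdiff_div_self_eq_one_sub ht (hA₀ _) (hA _)]
  exact (ENNReal.tendsto_const_sub_nhds_zero_iff ENNReal.one_ne_top fun i =>
    (ENNReal.div_le_div_right (measure_mono Set.inter_subset_right) _).trans
      ENNReal.div_self_le_one).symm

theorem measure_sdiff_div_le_of_subset {c : ℝ≥0∞} (hc : c ≠ 0) (hs₀ : m s ≠ 0) {r : Set M}
    (hrs : r ⊆ s) (hcr : c * m s ≤ m r) :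
    m (r \ t) / m r ≤ c⁻¹ * (m (s \ t) / m s) :=
  calc m (r \ t) / m r ≤ m (s \ t) / (c * m s) :=
        ENNReal.div_le_div (measure_mono (Set.sdiff_subset_sdiff_left hrs)) hcr
    _ = c⁻¹ * (m (s \ t) / m s) := by
        rw [div_eq_mul_inv, ENNReal.mul_inv (.inl hc) (.inr hs₀), div_eq_mul_inv]
        ring

theorem tendsto_measure_sdiff_div_zero_of_subset {c : ℝ≥0∞} (hc : c ≠ 0)
    (hQ₀ : ∀ i, m (Q i) ≠ 0) (hPQ : ∀ᶠ i in l, P i ⊆ Q i ∧ c * m (Q i) ≤ m (P i))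
    (hQ : Tendsto (fun i => m (Q i \ t) / m (Q i)) l (𝓝 0)) :
    Tendsto (fun i => m (P i \ t) / m (P i)) l (𝓝 0) := by
  have hbound : Tendsto (fun i => c⁻¹ * (m (Q i \ t) / m (Q i))) l (𝓝 0) := by
    simpa using ENNReal.Tendsto.const_mul hQ (Or.inr (ENNReal.inv_ne_top.mpr hc))
  refine tendsto_of_tendsto_of_tendsto_of_le_of_le' tendsto_const_nhds hbound
    (Eventually.of_forall fun _ => zero_le) ?_
  filter_upwards [hPQ] with i ⟨hsub, hle⟩
  exact measure_sdiff_div_le_of_subset hc (hQ₀ i) hsub hle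

end DensityRatio

theorem mul_mul_le_of_forall_mul_le_add {f : ℕ → ℝ≥0∞} {k : ℕ} {D : ℝ≥0∞}
    (hf : ∀ n, k ≤ n → D * f n ≤ f (n + k)) {n : ℕ} (hn : k ≤ n) :
    D * D * f n ≤ f (n + k + k) :=
  calc D * D * f n = D * (D * f n) := mul_assoc _ _ _
    _ ≤ D * f (n + k) := mul_le_mul_right (hf n hn) _
    _ ≤ f (n + k + k) := hf _ (by omega)

theorem vitali_equiv_of_nested_general {M : Type*} [MeasurableSpace M] (m : Measure M)
    (B C : M → ℕ → Set M)
    (hBpos : ∀ x n, 0 < m (B x n)) (hBfin : ∀ x n, m (B x n) < ⊤)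
    (hCpos : ∀ x n, 0 < m (C x n)) (hCfin : ∀ x n, m (C x n) < ⊤)
    (k : ℕ) (D : ENNReal) (hD : 0 < D)
    (hnest : ∀ x : M, ∀ n : ℕ, k ≤ n →
      B x (n + k) ⊆ C x n ∧ C x n ⊆ B x (n - k) ∧ D ≤ m (B x (n + k)) / m (B x n)) :
    ∀ X : Set M, MeasurableSet X → ∀ x : M,
      (Tendsto (fun n : ℕ => m (X ∩ C x n) / m (C x n)) atTop (nhds 1) ↔
        Tendsto (fun n : ℕ => m (X ∩ B x n) / m (B x n)) atTop (nhds 1)) := by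
  intro X hX x
  have hBC : ∀ n, k ≤ n → B x (n + k) ⊆ C x n := fun n hn => (hnest x n hn).1
  have hCB : ∀ n, C x (n + k) ⊆ B x n := fun n => by
    simpa using (hnest x (n + k) (Nat.le_add_left k n)).2.1
  have hgrow : ∀ n, k ≤ n → D * D * m (B x n) ≤ m (B x (n + k + k)) :=
    fun n => mul_mul_le_of_forall_mul_le_add (f := fun n => m (B x n)) fun n hn =>
      (ENNReal.le_div_iff_mul_le (.inl (hBpos x n).ne') (.inl (hBfin x n).ne)).mp (hnest x n hn).2.2
  have hDD : D * D ≠ 0 := mul_ne_zero hD.ne' hD.ne'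
  rw [tendsto_measure_inter_div_one_iff_sdiff_div_zero hX.nullMeasurableSet
      (fun n => (hCpos x n).ne') (fun n => (hCfin x n).ne),
    tendsto_measure_inter_div_one_iff_sdiff_div_zero hX.nullMeasurableSet
      (fun n => (hBpos x n).ne') (fun n => (hBfin x n).ne)]
  constructor
  · intro hC
    rw [← tendsto_add_atTop_iff_nat (k + k)]
    refine tendsto_measure_sdiff_div_zero_of_subset hDD (fun n => (hCpos x (n + k)).ne') ?_
      ((tendsto_add_atTop_iff_nat k).mpr hC)
    filter_upwards [eventually_ge_atTop k] with n hn
    refine ⟨by simpa [add_assoc] using hBC (n + k) (Nat.le_add_left k n), ?_⟩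
    calc D * D * m (C x (n + k)) ≤ D * D * m (B x n) := by gcongr; exact hCB n
      _ ≤ m (B x (n + (k + k))) := by simpa [add_assoc] using hgrow n hn
  · intro hB
    rw [← tendsto_add_atTop_iff_nat k]
    refine tendsto_measure_sdiff_div_zero_of_subset hDD (fun n => (hBpos x n).ne') ?_ hB
    filter_upwards [eventually_ge_atTop k] with n hn
    exact ⟨hCB n, (hgrow n hn).trans (measure_mono (hBC _ (Nat.le_add_left k n)))⟩

theorem vitali_equiv_of_nested {M : Type*} [MeasurableSpace M] (m : Measure M)
    (B C : M → ℕ → Set M)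
    (hBm : ∀ x n, MeasurableSet (B x n)) (hCm : ∀ x n, MeasurableSet (C x n))
    (hBpos : ∀ x n, 0 < m (B x n)) (hBfin : ∀ x n, m (B x n) < ⊤)
    (hCpos : ∀ x n, 0 < m (C x n)) (hCfin : ∀ x n, m (C x n) < ⊤)
    (k : ℕ) (D : ENNReal) (hD : 0 < D)
    (hnest : ∀ x : M, ∀ n : ℕ, k ≤ n →
      B x (n + k) ⊆ C x n ∧ C x n ⊆ B x (n - k) ∧ D ≤ m (B x (n + k)) / m (B x n)) :
    ∀ X : Set M, MeasurableSet X → ∀ x : M,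
      (Tendsto (fun n : ℕ => m (X ∩ C x n) / m (C x n)) atTop (nhds 1) ↔
        Tendsto (fun n : ℕ => m (X ∩ B x n) / m (B x n)) atTop (nhds 1)) :=
  vitali_equiv_of_nested_general m B C hBpos hBfin hCpos hCfin k D hD hnest
end

section
/- Let M be a compact metric space, f: M → M a homeomorphism, and α: M → ℝ₊ Hölder continuous, with α_n(x) = Π_{i=0}^{n−1} α(f^i(x)). Suppose 0 < ν(x) < 1 for a Hölder continuous ν, let ν_n be its cocycle, and assume d(f^k(x), f^k(y)) ≤ C₀ · ν_{n−k}(f^k(x))⁻¹·ν_n(x) for all 0 ≤ k ≤ n. Then there is C > 1, independent of x, y, n, with 1/C ≤ α_n(x)/α_n(y) ≤ C. -/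
open Finset Real Filter

private lemma holder_continuous {M : Type*} [MetricSpace M] (g : M → ℝ) (c θ : ℝ) (hθ : 0 < θ)
    (h : ∀ x y, |g x - g y| ≤ c * dist x y ^ θ) : Continuous g := by
  rw [continuous_iff_continuousAt]
  intro x
  rw [ContinuousAt, tendsto_iff_dist_tendsto_zero]
  refine squeeze_zero (g := fun y => c * dist y x ^ θ) (fun y => dist_nonneg) (fun y => ?_) ?_
  · rw [Real.dist_eq]; exact h y x
  have h1 : Tendsto (fun y => dist y x) (nhds x) (nhds 0) := by
    have := (continuous_id.dist (continuous_const (y := x))).tendsto x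
    simpa using this
  have h2 : Tendsto (fun t : ℝ => c * t ^ θ) (nhds 0) (nhds 0) := by
    have hc : ContinuousAt (fun t : ℝ => t ^ θ) 0 :=
      Real.continuousAt_rpow_const 0 θ (Or.inr hθ.le)
    have := (tendsto_const_nhds (x := c)).mul hc.tendsto
    rwa [Real.zero_rpow hθ.ne', mul_zero] at this
  exact h2.comp h1

private lemma log_sub_log_le {a b m : ℝ} (hm : 0 < m) (ha : m ≤ a) (hb : m ≤ b) :
    Real.log a - Real.log b ≤ |a - b| / m := by
  have ha0 : 0 < a := lt_of_lt_of_le hm ha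
  have hb0 : 0 < b := lt_of_lt_of_le hm hb
  rw [← Real.log_div ha0.ne' hb0.ne']
  calc Real.log (a / b) ≤ a / b - 1 := Real.log_le_sub_one_of_pos (div_pos ha0 hb0)
    _ = (a - b) / b := by field_simp
    _ ≤ |a - b| / m := div_le_div₀ (abs_nonneg _) (le_abs_self _) hm hb

private lemma abs_log_sub_log_le {a b m : ℝ} (hm : 0 < m) (ha : m ≤ a) (hb : m ≤ b) :
    |Real.log a - Real.log b| ≤ |a - b| / m := by
  rw [abs_le]
  constructor
  · have := log_sub_log_le hm hb ha
    rw [abs_sub_comm] at this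
    linarith
  · exact log_sub_log_le hm ha hb

theorem holder_cocycle_bounded_distortion_julienne {M : Type*} [MetricSpace M] [CompactSpace M]
    (f : M ≃ₜ M)
    (α : M → ℝ) (hαpos : ∀ x, 0 < α x)
    (cα θα : ℝ) (hcα : 0 < cα) (hθα : 0 < θα)
    (hαHolder : ∀ x y : M, |α x - α y| ≤ cα * dist x y ^ θα)
    (ν : M → ℝ) (hν0 : ∀ x, 0 < ν x) (hν1 : ∀ x, ν x < 1)
    (cν θν : ℝ) (hcν : 0 < cν) (hθν : 0 < θν)
    (hνHolder : ∀ x y : M, |ν x - ν y| ≤ cν * dist x y ^ θν)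
    (C₀ : ℝ) (hC₀ : 0 < C₀) :
    ∃ C : ℝ, 1 < C ∧ ∀ x y : M, ∀ n : ℕ,
      (∀ k : ℕ, k ≤ n →
        dist ((⇑f)^[k] x) ((⇑f)^[k] y) ≤
          C₀ * (∏ i ∈ range (n - k), ν ((⇑f)^[i] ((⇑f)^[k] x)))⁻¹ *
            ∏ i ∈ range n, ν ((⇑f)^[i] x)) →
      C⁻¹ ≤ (∏ i ∈ range n, α ((⇑f)^[i] x)) / (∏ i ∈ range n, α ((⇑f)^[i] y)) ∧
      (∏ i ∈ range n, α ((⇑f)^[i] x)) / (∏ i ∈ range n, α ((⇑f)^[i] y)) ≤ C := by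
  by_cases hM : Nonempty M
  swap
  · exact ⟨2, one_lt_two, fun x => absurd ⟨x⟩ hM⟩
  -- continuity of ν and α
  have hνcont : Continuous ν := holder_continuous ν cν θν hθν hνHolder
  have hαcont : Continuous α := holder_continuous α cα θα hθα hαHolder
  -- max of ν
  obtain ⟨z, -, hz⟩ := isCompact_univ.exists_isMaxOn (Set.univ_nonempty) hνcont.continuousOn
  set ρ : ℝ := ν z with hρdef
  have hρ0 : 0 < ρ := hν0 z
  have hρ1 : ρ < 1 := hν1 z
  have hρle : ∀ w : M, ν w ≤ ρ := fun w => hz (Set.mem_univ w)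
  -- min of α
  obtain ⟨w, -, hw⟩ := isCompact_univ.exists_isMinOn (Set.univ_nonempty) hαcont.continuousOn
  set a : ℝ := α w with hadef
  have ha0 : 0 < a := hαpos w
  have hale : ∀ u : M, a ≤ α u := fun u => hw (Set.mem_univ u)
  set r : ℝ := ρ ^ θα with hrdef
  have hr0 : 0 < r := Real.rpow_pos_of_pos hρ0 θα
  have hr1 : r < 1 := Real.rpow_lt_one hρ0.le hρ1 hθα
  set A : ℝ := cα * C₀ ^ θα / a with hAdef
  have hA0 : 0 < A := by
    have : (0:ℝ) < C₀ ^ θα := Real.rpow_pos_of_pos hC₀ θα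
    positivity
  set L : ℝ := A / (1 - r) with hLdef
  have hL0 : 0 < L := div_pos hA0 (by linarith)
  refine ⟨Real.exp L, by rwa [Real.one_lt_exp_iff], ?_⟩
  intro x y n hd
  -- step 1: dist bound
  have key : ∀ k : ℕ, k ≤ n → dist ((⇑f)^[k] x) ((⇑f)^[k] y) ≤ C₀ * ρ ^ k := by
    intro k hk
    have h1 := hd k hk
    have hsplit : (∏ i ∈ range n, ν ((⇑f)^[i] x)) =
        (∏ i ∈ range k, ν ((⇑f)^[i] x)) *
          ∏ i ∈ range (n - k), ν ((⇑f)^[i] ((⇑f)^[k] x)) := by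
      have hnk : n = k + (n - k) := by omega
      conv_lhs => rw [hnk, Finset.prod_range_add]
      congr 1
      refine Finset.prod_congr rfl fun i _ => ?_
      rw [← Function.iterate_add_apply, Nat.add_comm]
    have hP0 : (0:ℝ) < ∏ i ∈ range (n - k), ν ((⇑f)^[i] ((⇑f)^[k] x)) :=
      Finset.prod_pos fun i _ => hν0 _
    rw [hsplit] at h1
    have h2 : C₀ * (∏ i ∈ range (n - k), ν ((⇑f)^[i] ((⇑f)^[k] x)))⁻¹ *
        ((∏ i ∈ range k, ν ((⇑f)^[i] x)) *
          ∏ i ∈ range (n - k), ν ((⇑f)^[i] ((⇑f)^[k] x))) =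
        C₀ * ∏ i ∈ range k, ν ((⇑f)^[i] x) := by
      field_simp
    rw [h2] at h1
    refine h1.trans ?_
    have : (∏ i ∈ range k, ν ((⇑f)^[i] x)) ≤ ρ ^ k := by
      calc (∏ i ∈ range k, ν ((⇑f)^[i] x)) ≤ ∏ _i ∈ range k, ρ :=
            Finset.prod_le_prod (fun i _ => (hν0 _).le) (fun i _ => hρle _)
        _ = ρ ^ k := by simp
    nlinarith
  -- step 2: log bound termwise
  have logbd : ∀ k : ℕ, k < n →
      |Real.log (α ((⇑f)^[k] x)) - Real.log (α ((⇑f)^[k] y))| ≤ A * r ^ k := by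
    intro k hk
    have h3 : |α ((⇑f)^[k] x) - α ((⇑f)^[k] y)| ≤ cα * (C₀ ^ θα * r ^ k) := by
      refine (hαHolder _ _).trans ?_
      have hb : dist ((⇑f)^[k] x) ((⇑f)^[k] y) ^ θα ≤ (C₀ * ρ ^ k) ^ θα :=
        Real.rpow_le_rpow dist_nonneg (key k hk.le) hθα.le
      have heq : (C₀ * ρ ^ k) ^ θα = C₀ ^ θα * r ^ k := by
        rw [Real.mul_rpow hC₀.le (pow_nonneg hρ0.le k)]
        congr 1
        rw [← Real.rpow_natCast ρ k, ← Real.rpow_natCast r k, hrdef,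
          ← Real.rpow_mul hρ0.le, ← Real.rpow_mul hρ0.le]
        ring_nf
      rw [← heq]
      exact mul_le_mul_of_nonneg_left hb hcα.le
    have h4 := abs_log_sub_log_le ha0 (hale ((⇑f)^[k] x)) (hale ((⇑f)^[k] y))
    refine h4.trans ?_
    have hAe : A * r ^ k = (cα * (C₀ ^ θα * r ^ k)) / a := by rw [hAdef]; ring
    rw [hAe]
    exact (div_le_div_iff_of_pos_right ha0).mpr h3
  -- step 3: sum bound
  set Px := ∏ i ∈ range n, α ((⇑f)^[i] x) with hPx
  set Py := ∏ i ∈ range n, α ((⇑f)^[i] y) with hPy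
  have hPx0 : 0 < Px := Finset.prod_pos fun i _ => hαpos _
  have hPy0 : 0 < Py := Finset.prod_pos fun i _ => hαpos _
  have hlogsum : |Real.log Px - Real.log Py| ≤ L := by
    have e1 : Real.log Px = ∑ i ∈ range n, Real.log (α ((⇑f)^[i] x)) :=
      Real.log_prod fun i _ => (hαpos _).ne'
    have e2 : Real.log Py = ∑ i ∈ range n, Real.log (α ((⇑f)^[i] y)) :=
      Real.log_prod fun i _ => (hαpos _).ne'
    rw [e1, e2, ← Finset.sum_sub_distrib]
    calc |∑ i ∈ range n, (Real.log (α ((⇑f)^[i] x)) - Real.log (α ((⇑f)^[i] y)))|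
        ≤ ∑ i ∈ range n, |Real.log (α ((⇑f)^[i] x)) - Real.log (α ((⇑f)^[i] y))| :=
          Finset.abs_sum_le_sum_abs _ _
      _ ≤ ∑ i ∈ range n, A * r ^ i :=
          Finset.sum_le_sum fun i hi => logbd i (Finset.mem_range.mp hi)
      _ = A * ∑ i ∈ range n, r ^ i := by rw [Finset.mul_sum]
      _ ≤ A * (1 - r)⁻¹ := by
          refine mul_le_mul_of_nonneg_left ?_ hA0.le
          have hsum := Summable.sum_le_tsum (range n) (fun i _ => pow_nonneg hr0.le i)
            (summable_geometric_of_lt_one hr0.le hr1)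
          rwa [tsum_geometric_of_lt_one hr0.le hr1] at hsum
      _ = L := by rw [hLdef, div_eq_mul_inv]
  have hlogdiv : |Real.log (Px / Py)| ≤ L := by
    rwa [Real.log_div hPx0.ne' hPy0.ne']
  have hR0 : 0 < Px / Py := div_pos hPx0 hPy0
  rw [abs_le] at hlogdiv
  constructor
  · rw [← Real.exp_log hR0, ← Real.exp_neg]
    exact Real.exp_le_exp.mpr hlogdiv.1
  · rw [← Real.exp_log hR0]
    exact Real.exp_le_exp.mpr hlogdiv.2
end
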